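/- Let T be a finite tree with n ≥ 2 vertices and bipartition (X, Y). If T admits a set-ordered graceful labelling with respect to (X, Y), then there exists an injective function g : V(T) → {1, 2, …, 2n} such that the residues (g(u) + g(v)) mod 2n, over all n − 1 edges uv of T, are pairwise distinct and each of these residues is an odd number. -/

import Mathlib

/-- The induced edge label `|f u - f v|` for a vertex labelling `f`. -/
def elabel {V : Type*} (f : V → ℕ) (u v : V) : ℕ :=
  max (f u) (f v) - min (f u) (f v)

/-- `(X, Y)` is a bipartition of the graph `G`: the two parts cover all vertices,
are disjoint, and every edge joins a vertex of `X` to a vertex of `Y`. -/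
def IsBipartitionOf {V : Type*} (G : SimpleGraph V) (X Y : Finset V) : Prop :=
  (∀ v : V, v ∈ X ∨ v ∈ Y) ∧ (∀ v : V, ¬(v ∈ X ∧ v ∈ Y)) ∧
    ∀ ⦃u v : V⦄, G.Adj u v → (u ∈ X ∧ v ∈ Y) ∨ (u ∈ Y ∧ v ∈ X)

/-- `f` is a set-ordered graceful labelling of `G` (with `q` edges) with respect to the
bipartition `(X, Y)`: `f` is injective into `{0,…,q}`, the induced edge labels
`|f u - f v|` are pairwise distinct and form exactly `{1,…,q}`, and every label on `X`
is smaller than every label on `Y`. -/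
def IsSetOrderedGraceful {V : Type*} (G : SimpleGraph V) (X Y : Finset V) (q : ℕ)
    (f : V → ℕ) : Prop :=
  Function.Injective f ∧ (∀ v : V, f v ≤ q) ∧
    (∀ u v u' v' : V, G.Adj u v → G.Adj u' v' →
      elabel f u v = elabel f u' v' → s(u, v) = s(u', v')) ∧
    (∀ u v : V, G.Adj u v → 1 ≤ elabel f u v ∧ elabel f u v ≤ q) ∧
    (∀ m : ℕ, 1 ≤ m → m ≤ q → ∃ u v : V, G.Adj u v ∧ elabel f u v = m) ∧
    (∀ x ∈ X, ∀ y ∈ Y, f x < f y)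

/-- `f` is a set-ordered odd-graceful labelling of `G` (with `q` edges) with respect to
the bipartition `(X, Y)`: `f` is injective into `{0,…,2q-1}`, the induced edge labels
`|f u - f v|` are pairwise distinct and form exactly the odd numbers `{1,3,…,2q-1}`,
and every label on `X` is smaller than every label on `Y`. -/
def IsSetOrderedOddGraceful {V : Type*} (G : SimpleGraph V) (X Y : Finset V) (q : ℕ)
    (f : V → ℕ) : Prop :=
  Function.Injective f ∧ (∀ v : V, f v ≤ 2 * q - 1) ∧
    (∀ u v u' v' : V, G.Adj u v → G.Adj u' v' →
      elabel f u v = elabel f u' v' → s(u, v) = s(u', v')) ∧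
    (∀ u v : V, G.Adj u v → Odd (elabel f u v) ∧ elabel f u v ≤ 2 * q - 1) ∧
    (∀ m : ℕ, Odd m → m ≤ 2 * q - 1 → ∃ u v : V, G.Adj u v ∧ elabel f u v = m) ∧
    (∀ x ∈ X, ∀ y ∈ Y, f x < f y)

/-!
Double the graceful labels and reflect the side `Y`: `x ∈ X` gets `2 f x + 1` and `y ∈ Y` gets
`2n - 2 f y`. Since `f x < f y` along every edge, the sum over an edge is
`2n + 1 - 2 |f x - f y|`, which lies strictly between `0` and `2n`; so it is its own residue,
it is odd, and it determines the graceful edge label, whence distinct edges get distinct residues.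
-/

theorem elabel_comm {V : Type*} (f : V → ℕ) (u v : V) : elabel f u v = elabel f v u := by
  unfold elabel
  rw [max_comm, min_comm]

theorem elabel_of_lt {V : Type*} {f : V → ℕ} {u v : V} (h : f u < f v) :
    elabel f u v = f v - f u := by
  unfold elabel
  omega

section OddElegantLabel

variable {V : Type*} [DecidableEq V]

def oddElegantLabel (X : Finset V) (n : ℕ) (f : V → ℕ) (v : V) : ℕ :=
  if v ∈ X then 2 * f v + 1 else 2 * n - 2 * f v

variable {X : Finset V} {n : ℕ} {f : V → ℕ}

theorem oddElegantLabel_injective (hf : Function.Injective f) (hle : ∀ v, f v ≤ n - 1) :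
    Function.Injective (oddElegantLabel X n f) := by
  intro a b hab
  have ha := hle a
  have hb := hle b
  apply hf
  unfold oddElegantLabel at hab
  split_ifs at hab <;> omega

theorem oddElegantLabel_mem_Icc (hn : 1 ≤ n) {v : V} (hv : f v ≤ n - 1) :
    1 ≤ oddElegantLabel X n f v ∧ oddElegantLabel X n f v ≤ 2 * n := by
  unfold oddElegantLabel
  split_ifs <;> omega

theorem oddElegantLabel_add_mod {x y : V} (hx : x ∈ X) (hy : y ∉ X) (hlt : f x < f y)
    (hfy : f y ≤ n - 1) :
    (oddElegantLabel X n f x + oddElegantLabel X n f y) % (2 * n) =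
      2 * n + 1 - 2 * elabel f x y := by
  rw [elabel_of_lt hlt, Nat.mod_eq_of_lt] <;>
    simp only [oddElegantLabel, hx, hy, if_true, if_false] <;> omega

theorem oddElegantLabel_add_mod_of_adj {G : SimpleGraph V} {Y : Finset V}
    (hbip : IsBipartitionOf G X Y) (hf : IsSetOrderedGraceful G X Y (n - 1) f)
    {u v : V} (huv : G.Adj u v) :
    (oddElegantLabel X n f u + oddElegantLabel X n f v) % (2 * n) =
      2 * n + 1 - 2 * elabel f u v := by
  obtain ⟨-, hdisj, hside⟩ := hbip
  obtain ⟨-, hle, -, -, -, hXY⟩ := hf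
  rcases hside huv with ⟨hu, hv⟩ | ⟨hu, hv⟩
  · exact oddElegantLabel_add_mod hu (fun h => hdisj v ⟨h, hv⟩) (hXY u hu v hv) (hle v)
  · rw [add_comm, elabel_comm]
    exact oddElegantLabel_add_mod hv (fun h => hdisj u ⟨h, hu⟩) (hXY v hv u hu) (hle u)

end OddElegantLabel

theorem setOrderedGraceful_oddElegant_general {V : Type*}
    (G : SimpleGraph V)
    (n : ℕ) (hn2 : 2 ≤ n)
    (X Y : Finset V) (hbip : IsBipartitionOf G X Y)
    (f : V → ℕ) (hf : IsSetOrderedGraceful G X Y (n - 1) f) :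
    ∃ g : V → ℕ,
      Function.Injective g ∧ (∀ v : V, 1 ≤ g v ∧ g v ≤ 2 * n) ∧
      (∀ u v u' v' : V, G.Adj u v → G.Adj u' v' →
        (g u + g v) % (2 * n) = (g u' + g v') % (2 * n) → s(u, v) = s(u', v')) ∧
      (∀ u v : V, G.Adj u v → Odd ((g u + g v) % (2 * n))) := by
  classical
  have hsum := fun {u v} (huv : G.Adj u v) => oddElegantLabel_add_mod_of_adj hbip hf huv
  obtain ⟨hinj, hle, hdist, hrange, -, -⟩ := hf
  refine ⟨oddElegantLabel X n f, oddElegantLabel_injective hinj hle,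
    fun v => oddElegantLabel_mem_Icc (by omega) (hle v), ?_, ?_⟩
  · intro u v u' v' huv huv' heq
    rw [hsum huv, hsum huv'] at heq
    have := hrange u v huv
    have := hrange u' v' huv'
    exact hdist u v u' v' huv huv' (by omega)
  · intro u v huv
    rw [hsum huv]
    exact ⟨n - elabel f u v, by have := hrange u v huv; omega⟩

/-- If a finite tree with `n ≥ 2` vertices admits a set-ordered graceful labelling with
respect to a bipartition `(X, Y)`, then there is an injective `g : V(T) → {1,…,2n}`
such that the residues `(g u + g v) mod 2n`, over the edges, are pairwise distinct and
each residue is odd. -/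
theorem setOrderedGraceful_oddElegant {V : Type*} [Fintype V] [DecidableEq V]
    (G : SimpleGraph V) (hT : G.IsTree)
    (n : ℕ) (hn : Fintype.card V = n) (hn2 : 2 ≤ n)
    (X Y : Finset V) (hbip : IsBipartitionOf G X Y)
    (f : V → ℕ) (hf : IsSetOrderedGraceful G X Y (n - 1) f) :
    ∃ g : V → ℕ,
      Function.Injective g ∧ (∀ v : V, 1 ≤ g v ∧ g v ≤ 2 * n) ∧
      (∀ u v u' v' : V, G.Adj u v → G.Adj u' v' →
        (g u + g v) % (2 * n) = (g u' + g v') % (2 * n) → s(u, v) = s(u', v')) ∧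
      (∀ u v : V, G.Adj u v → Odd ((g u + g v) % (2 * n))) :=
  setOrderedGraceful_oddElegant_general G n hn2 X Y hbip f hf
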